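/- Let n ≥ 2, let ε > 0, let a ∈ ℝ, and let λ₁,…,λₙ and μ₁,…,μₙ be positive real numbers. Suppose that a + Σ_{i=1}^n μᵢ/λᵢ² − 2 Σ_{i=1}^n μᵢ/λᵢ ≤ ε, and that for every index k one has a − Σ_{i≠k} μᵢ > 2ε. Then for every k, λ_k/μ_k < 2/ε; consequently Σ_k λ_k ≤ (2/ε) Σ_k μ_k. -/
import Mathlib


open scoped BigOperators

/-- **Pointwise eigenvalue estimate in the second-order estimate for the
modified `J`-flow (Li–Shi–Yao).**  Let `n ≥ 2`, `ε > 0`, `a ∈ ℝ`, and let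
`λ₁,…,λₙ` and `μ₁,…,μₙ` be positive reals (the eigenvalues of the evolving
metric `χ_φ` and of the reference form `ω`, with `a = nc + θ_X(x₀)`).
Suppose `a + Σᵢ μᵢ/λᵢ² - 2 Σᵢ μᵢ/λᵢ ≤ ε`, and that for every index `k`,
`a - Σ_{i≠k} μᵢ > 2ε`.  Then for every `k`, `λ_k/μ_k < 2/ε`; consequently
`Σ_k λ_k ≤ (2/ε) Σ_k μ_k`. -/
theorem eigenvalue_estimate_at_maximum_point (n : ℕ) (hn : 2 ≤ n)
    (ε : ℝ) (hε : 0 < ε) (a : ℝ)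
    (lam mu : Fin n → ℝ)
    (hlam : ∀ i, 0 < lam i) (hmu : ∀ i, 0 < mu i)
    (h1 : a + ∑ i, mu i / (lam i) ^ 2 - 2 * ∑ i, mu i / lam i ≤ ε)
    (h2 : ∀ k, 2 * ε < a - ∑ i ∈ Finset.univ.erase k, mu i) :
    (∀ k, lam k / mu k < 2 / ε) ∧ (∑ k, lam k) ≤ (2 / ε) * ∑ k, mu k := by
  have key : ∀ k, lam k / mu k < 2 / ε := by
    intro k
    have hmem : k ∈ Finset.univ := Finset.mem_univ k
    have e1 := Finset.add_sum_erase Finset.univ (fun i => mu i / (lam i) ^ 2) hmem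
    have e2 := Finset.add_sum_erase Finset.univ (fun i => mu i / lam i) hmem
    -- Σ_{i≠k} μᵢ(1/λᵢ−1)² ≥ 0
    have hnn : (0:ℝ) ≤ ∑ i ∈ Finset.univ.erase k,
        (mu i / (lam i)^2 - 2 * (mu i / lam i) + mu i) := by
      apply Finset.sum_nonneg
      intro i _
      have hl := hlam i
      have hm := (hmu i).le
      have : mu i / (lam i)^2 - 2 * (mu i / lam i) + mu i
          = mu i * (1 / lam i - 1)^2 := by
        field_simp; ring
      rw [this]
      positivity
    have hk2 : (0:ℝ) ≤ mu k / (lam k)^2 := by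
      have h1 := (hmu k).le; have h2 := hlam k; positivity
    -- combine
    have hlow : a - ∑ i ∈ Finset.univ.erase k, mu i - 2 * (mu k / lam k)
        ≤ a + ∑ i, mu i / (lam i) ^ 2 - 2 * ∑ i, mu i / lam i := by
      rw [← e1, ← e2]
      have expand : ∑ i ∈ Finset.univ.erase k,
          (mu i / (lam i)^2 - 2 * (mu i / lam i) + mu i)
          = ∑ i ∈ Finset.univ.erase k, mu i / (lam i)^2
            - 2 * ∑ i ∈ Finset.univ.erase k, (mu i / lam i)
            + ∑ i ∈ Finset.univ.erase k, mu i := by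
        rw [Finset.mul_sum, ← Finset.sum_sub_distrib, ← Finset.sum_add_distrib]
      rw [expand] at hnn
      nlinarith [hk2]
    have h2k := h2 k
    have hml : ε / 2 < mu k / lam k := by linarith
    have hl := hlam k
    have hm := hmu k
    rw [div_lt_div_iff₀ hm hε]
    rw [div_lt_div_iff₀ (by linarith : (0:ℝ) < 2) hl] at hml
    linarith
  refine ⟨key, ?_⟩
  calc (∑ k, lam k) ≤ ∑ k, (2 / ε) * mu k := by
        apply Finset.sum_le_sum
        intro k _
        have := key k
        have hm := hmu k
        rw [div_lt_div_iff₀ hm hε] at this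
        have : lam k < 2 / ε * mu k := by
          rw [div_mul_eq_mul_div, lt_div_iff₀ hε]; linarith
        linarith
    _ = (2 / ε) * ∑ k, mu k := by rw [Finset.mul_sum]
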